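/- arXiv:1410.6204 — 2 statements merged into one kernel-verified Lean document; each statement's English description precedes it below -/
import Mathlib

section
/- Let G be a finite simple connected graph. Then ‖M_G‖_{1,∞} ≤ min{𝒟(G), 𝒪(G)}, i.e., for every f : V → ℝ and every t > 0, t·|{v ∈ V : M_G f(v) > t}| ≤ min{𝒟(G), 𝒪(G)}·‖f‖_1. -/
open scoped Classical
open Finset

noncomputable section

variable {V : Type*} [Fintype V]

/-- metric ball of radius `r` centered at `v` in the graph `G` -/
def gBall (G : SimpleGraph V) (v : V) (r : ℕ) : Finset V :=
  Finset.univ.filter fun w => G.dist v w ≤ r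

/-- Hardy–Littlewood maximal operator on the graph `G` -/
def maxOp (G : SimpleGraph V) (f : V → ℝ) (v : V) : ℝ :=
  ⨆ k : Fin (Fintype.card V), (∑ w ∈ gBall G v k.1, |f w|) / ((gBall G v k.1).card : ℝ)

/-- ℓ^p (quasi)norm of a function on the vertices -/
def pNorm (p : ℝ) (f : V → ℝ) : ℝ := (∑ v, |f v| ^ p) ^ (1 / p)

/-- operator (quasi)norm of the maximal operator of `G` on ℓ^p -/
def opNorm (G : SimpleGraph V) (p : ℝ) : ℝ :=
  ⨆ f : {f : V → ℝ // f ≠ 0}, pNorm p (maxOp G f.1) / pNorm p f.1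

/-- weak ℓ^p norm -/
def wNorm (p : ℝ) (f : V → ℝ) : ℝ :=
  ⨆ t : {t : ℝ // 0 < t},
    t.1 * ((Finset.univ.filter fun v => t.1 < |f v|).card : ℝ) ^ (1 / p)

/-- weak-type operator norm of the maximal operator of `G` -/
def wOpNorm (G : SimpleGraph V) (p : ℝ) : ℝ :=
  ⨆ f : {f : V → ℝ // f ≠ 0}, wNorm p (maxOp G f.1) / pNorm p f.1

/-- maximal operator over all graphs on `V` isomorphic to `G` -/
def maxOpIso (G : SimpleGraph V) (f : V → ℝ) (j : V) : ℝ :=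
  ⨆ H : {H : SimpleGraph V // Nonempty (H ≃g G)}, maxOp H.1 f j

/-- operator norm of `maxOpIso` on ℓ^p -/
def opNormIso (G : SimpleGraph V) (p : ℝ) : ℝ :=
  ⨆ f : {f : V → ℝ // f ≠ 0}, pNorm p (maxOpIso G f.1) / pNorm p f.1

/-- Kronecker delta at `k` -/
def kdelta (k : V) : V → ℝ := fun j => if j = k then 1 else 0

/-- star graph on `Fin n` with center `0` -/
def starGraph (n : ℕ) : SimpleGraph (Fin n) :=
  SimpleGraph.fromRel fun i _ => i.1 = 0

/-- diameter of a graph -/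
def gDiam (G : SimpleGraph V) : ℕ :=
  Finset.univ.sup fun p : V × V => G.dist p.1 p.2

/-- dilation index of a graph -/
def dilIndex (G : SimpleGraph V) : ℝ :=
  ⨆ x : V, ⨆ r : {r : ℕ // r ≤ gDiam G},
    ((gBall G x (3 * r.1)).card : ℝ) / ((gBall G x r.1).card : ℝ)

/-- overlapping index of a graph -/
def overlapIndex (G : SimpleGraph V) : ℕ :=
  sInf { r : ℕ | ∀ J : Finset (V × ℕ), ∃ I ⊆ J,
    J.biUnion (fun j => gBall G j.1 j.2) = I.biUnion (fun i => gBall G i.1 i.2) ∧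
    ∀ v : V, (I.filter fun i => v ∈ gBall G i.1 i.2).card ≤ r }

section Aux

variable (G : SimpleGraph V)

lemma mem_gBall_iff {v w : V} {r : ℕ} : w ∈ gBall G v r ↔ G.dist v w ≤ r := by
  simp [gBall]

lemma mem_gBall_self (v : V) (r : ℕ) : v ∈ gBall G v r := by
  simp [gBall, SimpleGraph.dist_self]

lemma gBall_card_pos (v : V) (r : ℕ) : 0 < (gBall G v r).card :=
  Finset.card_pos.mpr ⟨v, mem_gBall_self G v r⟩

lemma dist_le_gDiam (v w : V) : G.dist v w ≤ gDiam G :=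
  Finset.le_sup (f := fun p : V × V => G.dist p.1 p.2) (Finset.mem_univ (v, w))

/-- selection of a good ball from `maxOp f v > t` -/
lemma exists_good_ball [Nonempty V] (f : V → ℝ) {t : ℝ} {v : V}
    (h : t < maxOp G f v) :
    ∃ k : ℕ, k ≤ gDiam G ∧ t * ((gBall G v k).card : ℝ) < ∑ w ∈ gBall G v k, |f w| := by
  haveI : Nonempty (Fin (Fintype.card V)) := ⟨⟨0, Fintype.card_pos⟩⟩
  obtain ⟨k, hk⟩ := exists_lt_of_lt_ciSup h
  have hball : gBall G v k.1 = gBall G v (min k.1 (gDiam G)) := by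
    ext w
    simp only [mem_gBall_iff, le_min_iff]
    exact ⟨fun h => ⟨h, dist_le_gDiam G v w⟩, fun h => h.1⟩
  refine ⟨min k.1 (gDiam G), min_le_right _ _, ?_⟩
  rw [← hball]
  have hcpos : (0 : ℝ) < ((gBall G v k.1).card : ℝ) := by
    exact_mod_cast gBall_card_pos G v k.1
  exact (lt_div_iff₀ hcpos).mp hk

/-- finite Vitali covering lemma -/
lemma vitali (hG : G.Connected) (k : V → ℕ) (E : Finset V) :
    ∃ S ⊆ E,
      (∀ x ∈ S, ∀ y ∈ S, x ≠ y → Disjoint (gBall G x (k x)) (gBall G y (k y))) ∧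
      (∀ v ∈ E, ∃ x ∈ S, gBall G v (k v) ⊆ gBall G x (3 * k x)) := by
  induction E using Finset.strongInduction with
  | _ E ih =>
    rcases E.eq_empty_or_nonempty with rfl | hE
    · exact ⟨∅, Finset.Subset.refl _, by simp, by simp⟩
    · obtain ⟨x, hx, hmax⟩ := E.exists_max_image k hE
      set E' := E.filter (fun v => Disjoint (gBall G v (k v)) (gBall G x (k x))) with hE'
      have hxnot : x ∉ E' := by
        simp only [hE', Finset.mem_filter, not_and]
        intro _ hdis
        have hbot := disjoint_self.mp hdis
        have := mem_gBall_self G x (k x)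
        rw [hbot] at this
        exact absurd this (Finset.notMem_empty x)
      have hssub : E' ⊂ E := Finset.ssubset_iff_of_subset (Finset.filter_subset _ _)
        |>.mpr ⟨x, hx, hxnot⟩
      obtain ⟨S', hS'sub, hdisj, hcov⟩ := ih E' hssub
      refine ⟨insert x S', ?_, ?_, ?_⟩
      · exact Finset.insert_subset hx (hS'sub.trans (Finset.filter_subset _ _))
      · intro a ha b hb hab
        rcases Finset.mem_insert.mp ha with rfl | ha' <;>
          rcases Finset.mem_insert.mp hb with rfl | hb'
        · exact absurd rfl hab
        · exact ((Finset.mem_filter.mp (hS'sub hb')).2).symm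
        · exact (Finset.mem_filter.mp (hS'sub ha')).2
        · exact hdisj a ha' b hb' hab
      · intro v hv
        by_cases hv' : v ∈ E'
        · obtain ⟨y, hy, hsub⟩ := hcov v hv'
          exact ⟨y, Finset.mem_insert_of_mem hy, hsub⟩
        · refine ⟨x, Finset.mem_insert_self _ _, ?_⟩
          have hndis : ¬ Disjoint (gBall G v (k v)) (gBall G x (k x)) := by
            intro hdis
            exact hv' (Finset.mem_filter.mpr ⟨hv, hdis⟩)
          obtain ⟨z, hz1, hz2⟩ := Finset.not_disjoint_iff.mp hndis
          have hkv : k v ≤ k x := hmax v hv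
          intro w hw
          rw [mem_gBall_iff] at hz1 hz2 hw ⊢
          calc G.dist x w ≤ G.dist x z + G.dist z w := hG.dist_triangle
            _ ≤ G.dist x z + (G.dist z v + G.dist v w) :=
                Nat.add_le_add_left hG.dist_triangle _
            _ = G.dist x z + (G.dist v z + G.dist v w) := by rw [SimpleGraph.dist_comm (u := z) (v := v)]
            _ ≤ k x + (k v + k v) := by omega
            _ ≤ 3 * k x := by omega

lemma dilIndex_nonneg : 0 ≤ dilIndex G := by
  apply Real.iSup_nonneg
  intro x
  apply Real.iSup_nonneg
  intro r
  positivity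

lemma ratio_le_dilIndex [Nonempty V] (x : V) (r : ℕ) (hr : r ≤ gDiam G) :
    ((gBall G x (3 * r)).card : ℝ) / ((gBall G x r).card : ℝ) ≤ dilIndex G := by
  haveI : Finite {r : ℕ // r ≤ gDiam G} := by
    have : Finite {r : ℕ // r ∈ Set.Iic (gDiam G)} := (Set.finite_Iic (gDiam G)).to_subtype
    exact this
  have h1 : ((gBall G x (3 * r)).card : ℝ) / ((gBall G x r).card : ℝ) ≤
      ⨆ s : {s : ℕ // s ≤ gDiam G},
        ((gBall G x (3 * s.1)).card : ℝ) / ((gBall G x s.1).card : ℝ) :=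
    le_ciSup (f := fun s : {s : ℕ // s ≤ gDiam G} =>
        ((gBall G x (3 * s.1)).card : ℝ) / ((gBall G x s.1).card : ℝ))
      (Set.Finite.bddAbove (Set.finite_range _)) ⟨r, hr⟩
  exact h1.trans (le_ciSup (f := fun y : V => ⨆ s : {s : ℕ // s ≤ gDiam G},
      ((gBall G y (3 * s.1)).card : ℝ) / ((gBall G y s.1).card : ℝ))
    (Set.Finite.bddAbove (Set.finite_range _)) x)

/-- weak (1,1) bound via the dilation index -/
lemma dil_bound (hG : G.Connected) (f : V → ℝ) (t : ℝ) (ht : 0 < t) :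
    t * ((Finset.univ.filter fun v => t < maxOp G f v).card : ℝ)
      ≤ dilIndex G * ∑ v, |f v| := by
  haveI : Nonempty V := hG.nonempty
  set E := Finset.univ.filter fun v => t < maxOp G f v with hEdef
  have key : ∀ v ∈ E, ∃ kk : ℕ, kk ≤ gDiam G ∧
      t * ((gBall G v kk).card : ℝ) < ∑ w ∈ gBall G v kk, |f w| := by
    intro v hv
    exact exists_good_ball G f (Finset.mem_filter.mp hv).2
  choose! k hk1 hk2 using key
  obtain ⟨S, hSE, hdisj, hcov⟩ := vitali G hG k E
  have hE3 : E ⊆ S.biUnion (fun x => gBall G x (3 * k x)) := by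
    intro v hv
    obtain ⟨x, hxS, hsub⟩ := hcov v hv
    exact Finset.mem_biUnion.mpr ⟨x, hxS, hsub (mem_gBall_self G v (k v))⟩
  have hcard : (E.card : ℝ) ≤ ∑ x ∈ S, ((gBall G x (3 * k x)).card : ℝ) := by
    calc (E.card : ℝ) ≤ ((S.biUnion (fun x => gBall G x (3 * k x))).card : ℝ) := by
          exact_mod_cast Finset.card_le_card hE3
      _ ≤ ∑ x ∈ S, ((gBall G x (3 * k x)).card : ℝ) := by
          exact_mod_cast Finset.card_biUnion_le
  have hD := dilIndex_nonneg G
  have step2 : ∀ x ∈ S, ((gBall G x (3 * k x)).card : ℝ)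
      ≤ dilIndex G * ((gBall G x (k x)).card : ℝ) := by
    intro x hxS
    have hcpos : (0 : ℝ) < ((gBall G x (k x)).card : ℝ) := by
      exact_mod_cast gBall_card_pos G x (k x)
    have := ratio_le_dilIndex G x (k x) (hk1 x (hSE hxS))
    calc ((gBall G x (3 * k x)).card : ℝ)
        = ((gBall G x (3 * k x)).card : ℝ) / ((gBall G x (k x)).card : ℝ)
            * ((gBall G x (k x)).card : ℝ) := by field_simp
      _ ≤ dilIndex G * ((gBall G x (k x)).card : ℝ) :=
          mul_le_mul_of_nonneg_right this hcpos.le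
  calc t * (E.card : ℝ) ≤ t * ∑ x ∈ S, ((gBall G x (3 * k x)).card : ℝ) :=
        mul_le_mul_of_nonneg_left hcard ht.le
    _ ≤ t * ∑ x ∈ S, dilIndex G * ((gBall G x (k x)).card : ℝ) :=
        mul_le_mul_of_nonneg_left (Finset.sum_le_sum step2) ht.le
    _ = dilIndex G * ∑ x ∈ S, t * ((gBall G x (k x)).card : ℝ) := by
        rw [Finset.mul_sum, Finset.mul_sum]
        congr 1; ext x; ring
    _ ≤ dilIndex G * ∑ x ∈ S, ∑ w ∈ gBall G x (k x), |f w| := by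
        apply mul_le_mul_of_nonneg_left _ hD
        exact Finset.sum_le_sum fun x hxS => (hk2 x (hSE hxS)).le
    _ = dilIndex G * ∑ w ∈ S.biUnion (fun x => gBall G x (k x)), |f w| := by
        rw [Finset.sum_biUnion]
        intro a ha b hb hab
        exact hdisj a ha b hb hab
    _ ≤ dilIndex G * ∑ v, |f v| := by
        apply mul_le_mul_of_nonneg_left _ hD
        apply Finset.sum_le_sum_of_subset_of_nonneg (Finset.subset_univ _)
        intro i _ _
        positivity

lemma exists_subcover (J : Finset (V × ℕ)) :
    ∃ I ⊆ J, J.biUnion (fun j => gBall G j.1 j.2) = I.biUnion (fun i => gBall G i.1 i.2) ∧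
      Set.InjOn (fun j : V × ℕ => gBall G j.1 j.2) I := by
  induction J using Finset.strongInduction with
  | _ J ih =>
    by_cases h : Set.InjOn (fun j : V × ℕ => gBall G j.1 j.2) J
    · exact ⟨J, Finset.Subset.refl _, rfl, h⟩
    · simp only [Set.InjOn, not_forall] at h
      obtain ⟨a, ha, b, hb, hab, hne⟩ := h
      rw [Finset.mem_coe] at ha hb
      have hss : J.erase a ⊂ J := Finset.erase_ssubset ha
      obtain ⟨I, hIsub, hunion, hinj⟩ := ih _ hss
      refine ⟨I, hIsub.trans (Finset.erase_subset _ _), ?_, hinj⟩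
      rw [← hunion]
      apply Finset.Subset.antisymm
      · intro w hw
        obtain ⟨j, hj, hwj⟩ := Finset.mem_biUnion.mp hw
        by_cases hja : j = a
        · subst hja
          refine Finset.mem_biUnion.mpr ⟨b, Finset.mem_erase.mpr ⟨fun hba => hne hba.symm, hb⟩, ?_⟩
          simpa [← hab] using hwj
        · exact Finset.mem_biUnion.mpr ⟨j, Finset.mem_erase.mpr ⟨hja, hj⟩, hwj⟩
      · exact Finset.biUnion_subset_biUnion_of_subset_left _ (Finset.erase_subset _ _)

lemma overlap_mem : ∀ J : Finset (V × ℕ), ∃ I ⊆ J,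
    J.biUnion (fun j => gBall G j.1 j.2) = I.biUnion (fun i => gBall G i.1 i.2) ∧
    ∀ v : V, (I.filter fun i => v ∈ gBall G i.1 i.2).card ≤ overlapIndex G := by
  have hne : (Fintype.card (Finset V)) ∈ { r : ℕ | ∀ J : Finset (V × ℕ), ∃ I ⊆ J,
      J.biUnion (fun j => gBall G j.1 j.2) = I.biUnion (fun i => gBall G i.1 i.2) ∧
      ∀ v : V, (I.filter fun i => v ∈ gBall G i.1 i.2).card ≤ r } := by
    intro J
    obtain ⟨I, hIJ, hun, hinj⟩ := exists_subcover G J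
    refine ⟨I, hIJ, hun, fun v => ?_⟩
    calc (I.filter fun i => v ∈ gBall G i.1 i.2).card ≤ I.card :=
          Finset.card_filter_le _ _
      _ = (I.image (fun j : V × ℕ => gBall G j.1 j.2)).card :=
          (Finset.card_image_of_injOn hinj).symm
      _ ≤ Fintype.card (Finset V) := Finset.card_le_univ _
  exact Nat.sInf_mem ⟨_, hne⟩

/-- weak (1,1) bound via the overlapping index -/
lemma ov_bound (hG : G.Connected) (f : V → ℝ) (t : ℝ) (ht : 0 < t) :
    t * ((Finset.univ.filter fun v => t < maxOp G f v).card : ℝ)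
      ≤ (overlapIndex G : ℝ) * ∑ v, |f v| := by
  haveI : Nonempty V := hG.nonempty
  set E := Finset.univ.filter fun v => t < maxOp G f v with hEdef
  have key : ∀ v ∈ E, ∃ kk : ℕ, kk ≤ gDiam G ∧
      t * ((gBall G v kk).card : ℝ) < ∑ w ∈ gBall G v kk, |f w| := by
    intro v hv
    exact exists_good_ball G f (Finset.mem_filter.mp hv).2
  choose! k hk1 hk2 using key
  set J : Finset (V × ℕ) := E.image (fun v => (v, k v)) with hJdef
  obtain ⟨I, hIJ, hun, hov⟩ := overlap_mem G J
  have hEsub : E ⊆ I.biUnion (fun i => gBall G i.1 i.2) := by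
    intro v hv
    rw [← hun]
    exact Finset.mem_biUnion.mpr ⟨(v, k v), Finset.mem_image_of_mem _ hv,
      mem_gBall_self G v (k v)⟩
  have hball : ∀ i ∈ I, t * ((gBall G i.1 i.2).card : ℝ) ≤ ∑ w ∈ gBall G i.1 i.2, |f w| := by
    intro i hi
    obtain ⟨v, hv, hvi⟩ := Finset.mem_image.mp (hIJ hi)
    rw [← hvi]
    exact (hk2 v hv).le
  calc t * (E.card : ℝ)
      ≤ t * ((I.biUnion (fun i => gBall G i.1 i.2)).card : ℝ) := by
        apply mul_le_mul_of_nonneg_left _ ht.le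
        exact_mod_cast Finset.card_le_card hEsub
    _ ≤ t * ∑ i ∈ I, ((gBall G i.1 i.2).card : ℝ) := by
        apply mul_le_mul_of_nonneg_left _ ht.le
        exact_mod_cast Finset.card_biUnion_le
    _ = ∑ i ∈ I, t * ((gBall G i.1 i.2).card : ℝ) := Finset.mul_sum _ _ _
    _ ≤ ∑ i ∈ I, ∑ w ∈ gBall G i.1 i.2, |f w| := Finset.sum_le_sum hball
    _ = ∑ i ∈ I, ∑ w : V, if w ∈ gBall G i.1 i.2 then |f w| else 0 := by
        apply Finset.sum_congr rfl
        intro i _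
        rw [Finset.sum_ite_mem, Finset.univ_inter]
    _ = ∑ w : V, ∑ i ∈ I, if w ∈ gBall G i.1 i.2 then |f w| else 0 := Finset.sum_comm
    _ = ∑ w : V, ((I.filter fun i => w ∈ gBall G i.1 i.2).card : ℝ) * |f w| := by
        apply Finset.sum_congr rfl
        intro w _
        rw [← Finset.sum_filter, Finset.sum_const, nsmul_eq_mul]
    _ ≤ ∑ w : V, (overlapIndex G : ℝ) * |f w| := by
        apply Finset.sum_le_sum
        intro w _
        apply mul_le_mul_of_nonneg_right _ (abs_nonneg _)
        exact_mod_cast hov w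
    _ = (overlapIndex G : ℝ) * ∑ v, |f v| := (Finset.mul_sum _ _ _).symm

end Aux

/-- the weak-type (1,1) norm of the maximal operator is bounded by
the minimum of the dilation and overlapping indices. -/
theorem stmt18 {V : Type*} [Fintype V] (G : SimpleGraph V) (hG : G.Connected) :
    wOpNorm G 1 ≤ min (dilIndex G) ((overlapIndex G : ℝ)) ∧
    ∀ (f : V → ℝ) (t : ℝ), 0 < t →
      t * ((Finset.univ.filter fun v => t < maxOp G f v).card : ℝ)
        ≤ min (dilIndex G) ((overlapIndex G : ℝ)) * ∑ v, |f v| := by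
  haveI : Nonempty V := hG.nonempty
  set C := min (dilIndex G) ((overlapIndex G : ℝ)) with hCdef
  have hC : 0 ≤ C := le_min (dilIndex_nonneg G) (Nat.cast_nonneg _)
  have main : ∀ (f : V → ℝ) (t : ℝ), 0 < t →
      t * ((Finset.univ.filter fun v => t < maxOp G f v).card : ℝ) ≤ C * ∑ v, |f v| := by
    intro f t ht
    rcases le_total (dilIndex G) ((overlapIndex G : ℝ)) with h | h
    · rw [hCdef, min_eq_left h]
      exact dil_bound G hG f t ht
    · rw [hCdef, min_eq_right h]
      exact ov_bound G hG f t ht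
  refine ⟨?_, main⟩
  rw [wOpNorm]
  apply Real.iSup_le _ hC
  rintro ⟨f, hf⟩
  have hp : pNorm 1 f = ∑ v, |f v| := by
    simp [pNorm]
  have hpos : 0 < ∑ v, |f v| := by
    obtain ⟨v, hv⟩ := Function.ne_iff.mp hf
    apply Finset.sum_pos' (fun i _ => abs_nonneg _) ⟨v, Finset.mem_univ v, abs_pos.mpr hv⟩
  rw [div_le_iff₀ (by rwa [hp]), hp]
  rw [wNorm]
  apply Real.iSup_le _ (mul_nonneg hC hpos.le)
  rintro ⟨t, ht⟩
  have habs : ∀ v, |maxOp G f v| = maxOp G f v := by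
    intro v
    apply abs_of_nonneg
    apply Real.iSup_nonneg
    intro kk
    positivity
  simp only [habs]
  have h11 : ((Finset.univ.filter fun v => t < maxOp G f v).card : ℝ) ^ ((1 : ℝ)/1)
      = ((Finset.univ.filter fun v => t < maxOp G f v).card : ℝ) := by
    norm_num
  rw [h11]
  exact main f t ht
end
end

section
/- Let L_n be the linear tree (path graph) on n vertices. Then lim_{n→∞} ‖M_{L_n}‖_{1,∞} = 2. -/
open scoped Classical
open Finset

noncomputable section

variable {V : Type*} [Fintype V]

lemma pg_walk_bound {n : ℕ} {u v : Fin n} (p : (SimpleGraph.pathGraph n).Walk u v) :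
    v.val ≤ u.val + p.length ∧ u.val ≤ v.val + p.length := by
  induction p with
  | nil => simp
  | cons h q ih =>
    rw [SimpleGraph.pathGraph_adj] at h
    rcases ih with ⟨h1, h2⟩
    rcases h with h | h <;> constructor <;> simp [SimpleGraph.Walk.length_cons] <;> omega

lemma pg_dist_le {n : ℕ} (u v : Fin n) (d : ℕ) (h : u.val + d = v.val) :
    (SimpleGraph.pathGraph n).dist u v ≤ d := by
  induction d generalizing u with
  | zero =>
    have : u = v := by apply Fin.ext; omega
    simp [this, SimpleGraph.dist_self]
  | succ d ih =>
    have hn : u.val + 1 < n := by have := v.isLt; omega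
    set u' : Fin n := ⟨u.val + 1, hn⟩ with hu'
    have hadj : (SimpleGraph.pathGraph n).Adj u u' := by
      rw [SimpleGraph.pathGraph_adj]; left; rfl
    have h1 : (SimpleGraph.pathGraph n).dist u' v ≤ d := ih u' (by simp [hu']; omega)
    have _ : Nonempty (Fin n) := ⟨u⟩
    have hconn : (SimpleGraph.pathGraph n).Connected :=
      ⟨SimpleGraph.pathGraph_preconnected n⟩
    have htri := hconn.dist_triangle (u := u) (v := u') (w := v)
    have hd1 : (SimpleGraph.pathGraph n).dist u u' = 1 :=
      SimpleGraph.dist_eq_one_iff_adj.mpr hadj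
    omega

lemma pg_dist_eq {n : ℕ} (u v : Fin n) (h : u.val ≤ v.val) :
    (SimpleGraph.pathGraph n).dist u v = v.val - u.val := by
  apply le_antisymm
  · exact pg_dist_le u v _ (by omega)
  · have _ : Nonempty (Fin n) := ⟨u⟩
    have hconn : (SimpleGraph.pathGraph n).Connected :=
      ⟨SimpleGraph.pathGraph_preconnected n⟩
    obtain ⟨p, hp⟩ := hconn.exists_walk_length_eq_dist u v
    have := pg_walk_bound p
    omega

lemma pg_dist {n : ℕ} (u v : Fin n) (k : ℕ) :
    (SimpleGraph.pathGraph n).dist u v ≤ k ↔ (v.val ≤ u.val + k ∧ u.val ≤ v.val + k) := by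
  rcases le_total u.val v.val with h | h
  · rw [pg_dist_eq u v h]; omega
  · rw [SimpleGraph.dist_comm, pg_dist_eq v u h]; omega

lemma gBall_eq_filter {n : ℕ} (v : Fin n) (k : ℕ) :
    gBall (SimpleGraph.pathGraph n) v k =
      Finset.univ.filter (fun w : Fin n => v.val - k ≤ w.val ∧ w.val ≤ min (v.val + k) (n-1)) := by
  ext w
  have := w.isLt
  simp only [gBall, Finset.mem_filter, Finset.mem_univ, true_and, pg_dist]
  omega

lemma card_filter_Icc {n a b : ℕ} (hb : b < n) :
    (Finset.univ.filter fun w : Fin n => a ≤ w.val ∧ w.val ≤ b).card = b + 1 - a := by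
  have hmem : ∀ m ∈ Finset.Icc a b, m < n := by
    intro m hm; rw [Finset.mem_Icc] at hm; omega
  have : (Finset.univ.filter fun w : Fin n => a ≤ w.val ∧ w.val ≤ b)
      = (Finset.Icc a b).attachFin hmem := by
    ext w
    simp [Finset.mem_attachFin, Finset.mem_Icc]
  rw [this, Finset.card_attachFin, Nat.card_Icc]

lemma gBall_pg_card {n : ℕ} (hn : 0 < n) (v : Fin n) (k : ℕ) :
    (gBall (SimpleGraph.pathGraph n) v k).card = min (v.val + k) (n-1) + 1 - (v.val - k) := by
  rw [gBall_eq_filter, card_filter_Icc (by omega)]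

lemma mem_gBall_self_s19 {n : ℕ} (v : Fin n) (k : ℕ) : v ∈ gBall (SimpleGraph.pathGraph n) v k := by
  rw [gBall_eq_filter]
  have := v.isLt
  simp only [Finset.mem_filter, Finset.mem_univ, true_and]
  omega

lemma sel_aux : ∀ (N : ℕ) (J : Finset (ℕ × ℕ)), J.card ≤ N →
    ∃ T ⊆ J, J.biUnion (fun p => Finset.Icc p.1 p.2) = T.biUnion (fun p => Finset.Icc p.1 p.2) ∧
      ∀ x : ℕ, (T.filter fun p => x ∈ Finset.Icc p.1 p.2).card ≤ 2 := by
  intro N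
  induction N with
  | zero =>
    intro J hJ
    have : J = ∅ := Finset.card_eq_zero.mp (le_antisymm hJ (Nat.zero_le _))
    exact ⟨J, le_refl _, rfl, by simp [this]⟩
  | succ N ih =>
    intro J hJ
    by_cases hx : ∀ x : ℕ, (J.filter fun p => x ∈ Finset.Icc p.1 p.2).card ≤ 2
    · exact ⟨J, le_refl _, rfl, hx⟩
    · push_neg at hx
      obtain ⟨x, hx⟩ := hx
      set F := J.filter fun p => x ∈ Finset.Icc p.1 p.2 with hF
      have hFJ : F ⊆ J := Finset.filter_subset _ _
      have hFne : F.Nonempty := Finset.card_pos.mp (by omega)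
      obtain ⟨p1, hp1F, hp1min⟩ := F.exists_min_image (fun p => p.1) hFne
      obtain ⟨p2, hp2F, hp2max⟩ := F.exists_max_image (fun p => p.2) hFne
      have hcard : 1 ≤ ((F.erase p1).erase p2).card := by
        have h1 := Finset.pred_card_le_card_erase (s := F) (a := p1)
        have h2 := Finset.pred_card_le_card_erase (s := F.erase p1) (a := p2)
        omega
      obtain ⟨q, hq⟩ := Finset.card_pos.mp (show 0 < ((F.erase p1).erase p2).card by omega)
      have hq2 : q ≠ p2 := (Finset.mem_erase.mp hq).1
      have hq1 : q ≠ p1 := (Finset.mem_erase.mp (Finset.mem_erase.mp hq).2).1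
      have hqF : q ∈ F := (Finset.mem_erase.mp (Finset.mem_erase.mp hq).2).2
      have hqJ : q ∈ J := hFJ hqF
      have hxq : q.1 ≤ x ∧ x ≤ q.2 := by
        have := (Finset.mem_filter.mp hqF).2; rwa [Finset.mem_Icc] at this
      have hxp1 : p1.1 ≤ x ∧ x ≤ p1.2 := by
        have := (Finset.mem_filter.mp hp1F).2; rwa [Finset.mem_Icc] at this
      have hxp2 : p2.1 ≤ x ∧ x ≤ p2.2 := by
        have := (Finset.mem_filter.mp hp2F).2; rwa [Finset.mem_Icc] at this
      have hmin := hp1min q hqF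
      have hmax := hp2max q hqF
      have hsub : Finset.Icc q.1 q.2 ⊆ Finset.Icc p1.1 p1.2 ∪ Finset.Icc p2.1 p2.2 := by
        intro y hy
        rw [Finset.mem_Icc] at hy
        rw [Finset.mem_union, Finset.mem_Icc, Finset.mem_Icc]
        omega
      have hcard' : (J.erase q).card ≤ N := by
        have e1 := Finset.card_erase_of_mem hqJ
        have e2 := Finset.card_pos.mpr ⟨q, hqJ⟩
        have e3 := Finset.card_le_card hFJ
        omega
      obtain ⟨T, hT1, hT2, hT3⟩ := ih (J.erase q) hcard'
      refine ⟨T, hT1.trans (Finset.erase_subset _ _), ?_, hT3⟩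
      rw [← hT2]
      apply Finset.Subset.antisymm
      · intro y hy
        rw [Finset.mem_biUnion] at hy ⊢
        obtain ⟨p, hpJ, hyp⟩ := hy
        by_cases hpq : p = q
        · subst hpq
          rcases Finset.mem_union.mp (hsub hyp) with h | h
          · exact ⟨p1, Finset.mem_erase.mpr ⟨fun h' => hq1 h'.symm, hFJ hp1F⟩, h⟩
          · exact ⟨p2, Finset.mem_erase.mpr ⟨fun h' => hq2 h'.symm, hFJ hp2F⟩, h⟩
        · exact ⟨p, Finset.mem_erase.mpr ⟨hpq, hpJ⟩, hyp⟩
      · exact Finset.biUnion_subset_biUnion_of_subset_left _ (Finset.erase_subset _ _)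

lemma sel (J : Finset (ℕ × ℕ)) :
    ∃ T ⊆ J, J.biUnion (fun p => Finset.Icc p.1 p.2) = T.biUnion (fun p => Finset.Icc p.1 p.2) ∧
      ∀ x : ℕ, (T.filter fun p => x ∈ Finset.Icc p.1 p.2).card ≤ 2 :=
  sel_aux J.card J (le_refl _)
lemma sum_exchange {n : ℕ} (T : Finset (ℕ × ℕ)) (g : Fin n → ℝ) (hg : ∀ w, 0 ≤ g w)
    (hmul : ∀ x : ℕ, (T.filter fun p => x ∈ Finset.Icc p.1 p.2).card ≤ 2) :
    ∑ p ∈ T, ∑ w ∈ Finset.univ.filter (fun w : Fin n => p.1 ≤ w.val ∧ w.val ≤ p.2), g w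
      ≤ 2 * ∑ w, g w := by
  have step1 : ∀ p : ℕ × ℕ,
      ∑ w ∈ Finset.univ.filter (fun w : Fin n => p.1 ≤ w.val ∧ w.val ≤ p.2), g w
        = ∑ w : Fin n, if w.val ∈ Finset.Icc p.1 p.2 then g w else 0 := by
    intro p
    rw [Finset.sum_filter]
    apply Finset.sum_congr rfl
    intro w _
    simp [Finset.mem_Icc]
  calc ∑ p ∈ T, ∑ w ∈ Finset.univ.filter (fun w : Fin n => p.1 ≤ w.val ∧ w.val ≤ p.2), g w
      = ∑ p ∈ T, ∑ w : Fin n, if w.val ∈ Finset.Icc p.1 p.2 then g w else 0 := by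
        exact Finset.sum_congr rfl fun p _ => step1 p
    _ = ∑ w : Fin n, ∑ p ∈ T, if w.val ∈ Finset.Icc p.1 p.2 then g w else 0 :=
        Finset.sum_comm
    _ = ∑ w : Fin n, ((T.filter fun p => w.val ∈ Finset.Icc p.1 p.2).card : ℝ) * g w := by
        apply Finset.sum_congr rfl
        intro w _
        rw [← Finset.sum_filter, Finset.sum_const, nsmul_eq_mul]
    _ ≤ ∑ w : Fin n, 2 * g w := by
        apply Finset.sum_le_sum
        intro w _
        apply mul_le_mul_of_nonneg_right _ (hg w)
        exact_mod_cast hmul w.val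
    _ = 2 * ∑ w, g w := by rw [Finset.mul_sum]

lemma exists_interval {n : ℕ} (f : Fin n → ℝ) (t : ℝ) (v : Fin n)
    (hv : t < maxOp (SimpleGraph.pathGraph n) f v) :
    ∃ p : ℕ × ℕ, (p.1 ≤ v.val ∧ v.val ≤ p.2) ∧ p.2 < n ∧
      t * ((p.2 + 1 - p.1 : ℕ) : ℝ) <
        ∑ w ∈ Finset.univ.filter (fun w : Fin n => p.1 ≤ w.val ∧ w.val ≤ p.2), |f w| := by
  have hn : 0 < n := v.pos
  have _ : Nonempty (Fin (Fintype.card (Fin n))) := by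
    rw [Fintype.card_fin]; exact ⟨⟨0, hn⟩⟩
  obtain ⟨k, hk⟩ := exists_lt_of_lt_ciSup hv
  set B := gBall (SimpleGraph.pathGraph n) v k.1 with hB
  have hvB : v ∈ B := mem_gBall_self_s19 v k.1
  have hcard : 0 < B.card := Finset.card_pos.mpr ⟨v, hvB⟩
  have hcardR : (0:ℝ) < (B.card : ℝ) := by exact_mod_cast hcard
  rw [lt_div_iff₀ hcardR] at hk
  refine ⟨(v.val - k.1, min (v.val + k.1) (n-1)), ?_, by omega, ?_⟩
  · have := v.isLt
    exact ⟨Nat.sub_le _ _, by simp; omega⟩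
  · have hBf : B = Finset.univ.filter
        (fun w : Fin n => v.val - k.1 ≤ w.val ∧ w.val ≤ min (v.val + k.1) (n-1)) :=
      gBall_eq_filter v k.1
    have hcardeq : B.card = min (v.val + k.1) (n-1) + 1 - (v.val - k.1) :=
      gBall_pg_card hn v k.1
    calc t * _ = t * (B.card : ℝ) := by rw [hcardeq]
      _ < ∑ w ∈ B, |f w| := hk
      _ = _ := by rw [hBf]
lemma weak_bound {n : ℕ} (f : Fin n → ℝ) {t : ℝ} (ht : 0 < t) :
    t * ((Finset.univ.filter fun v : Fin n => t < maxOp (SimpleGraph.pathGraph n) f v).card : ℝ)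
      ≤ 2 * ∑ v, |f v| := by
  set E := Finset.univ.filter fun v : Fin n => t < maxOp (SimpleGraph.pathGraph n) f v with hE
  have hch : ∀ v : Fin n, v ∈ E → ∃ p : ℕ × ℕ, (p.1 ≤ v.val ∧ v.val ≤ p.2) ∧ p.2 < n ∧
      t * ((p.2 + 1 - p.1 : ℕ) : ℝ) <
        ∑ w ∈ Finset.univ.filter (fun w : Fin n => p.1 ≤ w.val ∧ w.val ≤ p.2), |f w| := by
    intro v hv
    exact exists_interval f t v ((Finset.mem_filter.mp hv).2)
  let c : Fin n → ℕ × ℕ := fun v => if hv : v ∈ E then Classical.choose (hch v hv) else (0, 0)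
  have hc1 : ∀ v ∈ E, (c v).1 ≤ v.val ∧ v.val ≤ (c v).2 := fun v hv => by
    simp only [c, dif_pos hv]; exact (Classical.choose_spec (hch v hv)).1
  have hc2 : ∀ v ∈ E, t * (((c v).2 + 1 - (c v).1 : ℕ) : ℝ) <
      ∑ w ∈ Finset.univ.filter (fun w : Fin n => (c v).1 ≤ w.val ∧ w.val ≤ (c v).2), |f w| :=
    fun v hv => by
      simp only [c, dif_pos hv]; exact (Classical.choose_spec (hch v hv)).2.2
  set J := E.image c with hJ
  obtain ⟨T, hTJ, hTun, hTmul⟩ := sel J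
  have hTP : ∀ p ∈ T, t * ((p.2 + 1 - p.1 : ℕ) : ℝ) ≤
      ∑ w ∈ Finset.univ.filter (fun w : Fin n => p.1 ≤ w.val ∧ w.val ≤ p.2), |f w| := by
    intro p hp
    obtain ⟨v, hv, hvc⟩ := Finset.mem_image.mp (hTJ hp)
    subst hvc
    exact (hc2 v hv).le
  have hcover : E.image (fun v : Fin n => v.val) ⊆ T.biUnion (fun p => Finset.Icc p.1 p.2) := by
    intro x hx
    obtain ⟨v, hv, rfl⟩ := Finset.mem_image.mp hx
    rw [← hTun]
    exact Finset.mem_biUnion.mpr ⟨c v, Finset.mem_image_of_mem c hv,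
      Finset.mem_Icc.mpr (hc1 v hv)⟩
  have hcardE : E.card ≤ ∑ p ∈ T, (p.2 + 1 - p.1) := by
    calc E.card = (E.image (fun v : Fin n => v.val)).card :=
          (Finset.card_image_of_injective E Fin.val_injective).symm
      _ ≤ (T.biUnion (fun p => Finset.Icc p.1 p.2)).card := Finset.card_le_card hcover
      _ ≤ ∑ p ∈ T, (Finset.Icc p.1 p.2).card := Finset.card_biUnion_le
      _ = ∑ p ∈ T, (p.2 + 1 - p.1) := by simp [Nat.card_Icc]
  calc t * (E.card : ℝ) ≤ t * ((∑ p ∈ T, (p.2 + 1 - p.1) : ℕ) : ℝ) := by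
        apply mul_le_mul_of_nonneg_left _ ht.le
        exact_mod_cast hcardE
    _ = ∑ p ∈ T, t * ((p.2 + 1 - p.1 : ℕ) : ℝ) := by
        rw [Nat.cast_sum, Finset.mul_sum]
    _ ≤ ∑ p ∈ T, ∑ w ∈ Finset.univ.filter (fun w : Fin n => p.1 ≤ w.val ∧ w.val ≤ p.2), |f w| :=
        Finset.sum_le_sum hTP
    _ ≤ 2 * ∑ v, |f v| := sum_exchange T _ (fun w => abs_nonneg _) hTmul
lemma maxOp_nonneg (G : SimpleGraph V) (f : V → ℝ) (v : V) : 0 ≤ maxOp G f v :=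
  Real.iSup_nonneg fun k => div_nonneg (Finset.sum_nonneg fun w _ => abs_nonneg _)
    (Nat.cast_nonneg _)

lemma pNorm_one_eq (f : V → ℝ) : pNorm 1 f = ∑ v, |f v| := by
  simp only [pNorm, one_div_one, Real.rpow_one]

lemma wNorm_le_two {n : ℕ} (f : Fin n → ℝ) :
    wNorm 1 (maxOp (SimpleGraph.pathGraph n) f) ≤ 2 * ∑ v, |f v| := by
  apply Real.iSup_le _ (by positivity)
  rintro ⟨t, ht⟩
  have hfe : (Finset.univ.filter fun v : Fin n => t < |maxOp (SimpleGraph.pathGraph n) f v|)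
      = Finset.univ.filter fun v : Fin n => t < maxOp (SimpleGraph.pathGraph n) f v := by
    apply Finset.filter_congr
    intro v _
    rw [abs_of_nonneg (maxOp_nonneg _ f v)]
  simp only [one_div_one, Real.rpow_one, hfe]
  exact weak_bound f ht

lemma ratio_le_two {n : ℕ} (f : Fin n → ℝ) (hf : f ≠ 0) :
    wNorm 1 (maxOp (SimpleGraph.pathGraph n) f) / pNorm 1 f ≤ 2 := by
  have hpos : 0 < pNorm 1 f := by
    rw [pNorm_one_eq]
    obtain ⟨v, hv⟩ : ∃ v, f v ≠ 0 := Function.ne_iff.mp hf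
    refine lt_of_lt_of_le (abs_pos.mpr hv) ?_
    exact Finset.single_le_sum (f := fun w => |f w|) (fun i _ => abs_nonneg _) (Finset.mem_univ v)
  rw [div_le_iff₀ hpos]
  calc wNorm 1 (maxOp (SimpleGraph.pathGraph n) f) ≤ 2 * ∑ v, |f v| := wNorm_le_two f
    _ = 2 * pNorm 1 f := by rw [pNorm_one_eq]

lemma wOpNorm_le_two {n : ℕ} : wOpNorm (SimpleGraph.pathGraph n) 1 ≤ 2 :=
  Real.iSup_le (fun f => ratio_le_two f.1 f.2) (by norm_num)

lemma kdelta_sum {n : ℕ} (m : Fin n) (B : Finset (Fin n)) (hm : m ∈ B) :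
    ∑ w ∈ B, |kdelta m w| = 1 := by
  have habs : ∀ w, |kdelta m w| = if w = m then (1:ℝ) else 0 := by
    intro w; simp only [kdelta]; split <;> norm_num
  simp only [habs]
  rw [Finset.sum_ite_eq' B m (fun _ => (1:ℝ)), if_pos hm]

lemma kdelta_pNorm {n : ℕ} (hn : 0 < n) (m : Fin n) : pNorm 1 (kdelta m) = 1 := by
  rw [pNorm_one_eq]
  exact kdelta_sum m Finset.univ (Finset.mem_univ m)

lemma kdelta_ne {n : ℕ} (m : Fin n) : (kdelta m : Fin n → ℝ) ≠ 0 := by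
  intro h
  have := congrFun h m
  simp [kdelta] at this
lemma delta_lb {n : ℕ} (hn : 0 < n) (v : Fin n) :
    1 / (((n/2 : ℕ) : ℝ) + 1) ≤ maxOp (SimpleGraph.pathGraph n) (kdelta ⟨n/2, by omega⟩) v := by
  set m : Fin n := ⟨n/2, by omega⟩ with hm
  set k : ℕ := (SimpleGraph.pathGraph n).dist v m with hkdef
  have hmval : m.val = n/2 := rfl
  have hkval : (v.val ≤ m.val ∧ k = m.val - v.val) ∨ (m.val ≤ v.val ∧ k = v.val - m.val) := by
    rcases le_total v.val m.val with h | h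
    · exact Or.inl ⟨h, pg_dist_eq v m h⟩
    · refine Or.inr ⟨h, ?_⟩
      rw [hkdef, SimpleGraph.dist_comm]
      exact pg_dist_eq m v h
  have hk : k < Fintype.card (Fin n) := by
    rw [Fintype.card_fin]
    have h1 := v.isLt
    have h2 := m.isLt
    omega
  have hcard : (gBall (SimpleGraph.pathGraph n) v k).card ≤ n/2 + 1 := by
    rw [gBall_pg_card hn]
    have h1 := v.isLt
    omega
  have hcpos : 0 < (gBall (SimpleGraph.pathGraph n) v k).card :=
    Finset.card_pos.mpr ⟨v, mem_gBall_self_s19 v k⟩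
  have hmB : m ∈ gBall (SimpleGraph.pathGraph n) v k := by
    simp only [gBall, Finset.mem_filter, Finset.mem_univ, true_and]
    exact hkdef.ge
  have hterm : 1 / (((n/2 : ℕ) : ℝ) + 1) ≤
      (∑ w ∈ gBall (SimpleGraph.pathGraph n) v k, |kdelta m w|) /
        ((gBall (SimpleGraph.pathGraph n) v k).card : ℝ) := by
    rw [kdelta_sum m _ hmB]
    apply one_div_le_one_div_of_le
    · exact_mod_cast hcpos
    · push_cast
      exact_mod_cast Nat.cast_le.mpr hcard
  have hle := le_ciSup (f := fun j : Fin (Fintype.card (Fin n)) =>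
      (∑ w ∈ gBall (SimpleGraph.pathGraph n) v j.1, |kdelta m w|) /
        ((gBall (SimpleGraph.pathGraph n) v j.1).card : ℝ))
    (Set.Finite.bddAbove (Set.finite_range _)) ⟨k, hk⟩
  exact le_trans hterm hle

lemma wNorm_delta_lb {n : ℕ} (hn : 0 < n) :
    (n : ℝ) / (((n/2 : ℕ) : ℝ) + 2) ≤
      wNorm 1 (maxOp (SimpleGraph.pathGraph n) (kdelta ⟨n/2, by omega⟩)) := by
  set t : ℝ := 1 / (((n/2 : ℕ) : ℝ) + 2) with ht
  have htpos : 0 < t := by positivity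
  set F := fun s : {t : ℝ // 0 < t} =>
    s.1 * ((Finset.univ.filter fun v : Fin n =>
      s.1 < |maxOp (SimpleGraph.pathGraph n) (kdelta ⟨n/2, by omega⟩) v|).card : ℝ) ^ ((1:ℝ)/1)
    with hF
  have hbdd : BddAbove (Set.range F) := by
    refine ⟨2 * ∑ v : Fin n, |kdelta (⟨n/2, by omega⟩ : Fin n) v|, ?_⟩
    rintro x ⟨s, rfl⟩
    rw [hF]
    simp only [one_div_one, Real.rpow_one]
    have hfe : (Finset.univ.filter fun v : Fin n =>
        s.1 < |maxOp (SimpleGraph.pathGraph n) (kdelta ⟨n/2, by omega⟩) v|)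
        = Finset.univ.filter fun v : Fin n =>
          s.1 < maxOp (SimpleGraph.pathGraph n) (kdelta ⟨n/2, by omega⟩) v := by
      apply Finset.filter_congr
      intro v _
      rw [abs_of_nonneg (maxOp_nonneg _ _ v)]
    rw [hfe]
    exact weak_bound _ s.2
  have hval : (n : ℝ) / (((n/2 : ℕ) : ℝ) + 2) ≤ F ⟨t, htpos⟩ := by
    rw [hF]
    have hfull : (Finset.univ.filter fun v : Fin n =>
        t < |maxOp (SimpleGraph.pathGraph n) (kdelta ⟨n/2, by omega⟩) v|) = Finset.univ := by
      apply Finset.filter_true_of_mem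
      intro v _
      rw [abs_of_nonneg (maxOp_nonneg _ _ v)]
      refine lt_of_lt_of_le ?_ (delta_lb hn v)
      rw [ht]
      apply one_div_lt_one_div_of_lt
      · positivity
      · norm_num
    simp only [hfull, Finset.card_univ, Fintype.card_fin, one_div_one, Real.rpow_one]
    rw [ht, one_div_mul_eq_div]
  exact le_trans hval (le_ciSup hbdd ⟨t, htpos⟩)

lemma wOpNorm_lb {n : ℕ} (hn : 0 < n) :
    (n : ℝ) / (((n/2 : ℕ) : ℝ) + 2) ≤ wOpNorm (SimpleGraph.pathGraph n) 1 := by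
  have hbdd : BddAbove (Set.range fun f : {f : Fin n → ℝ // f ≠ 0} =>
      wNorm 1 (maxOp (SimpleGraph.pathGraph n) f.1) / pNorm 1 f.1) := by
    refine ⟨2, ?_⟩
    rintro x ⟨f, rfl⟩
    exact ratio_le_two f.1 f.2
  refine le_trans ?_ (le_ciSup hbdd ⟨kdelta ⟨n/2, by omega⟩, kdelta_ne _⟩)
  rw [kdelta_pNorm hn, div_one]
  exact wNorm_delta_lb hn

/-- the weak-type (1,1) norm of the maximal operator of the linear
tree tends to 2. -/
theorem stmt19 :
    Filter.Tendsto (fun n : ℕ => wOpNorm (SimpleGraph.pathGraph n) 1)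
      Filter.atTop (nhds 2) := by
  have hlow : ∀ᶠ n : ℕ in Filter.atTop,
      2 - 8/(n:ℝ) ≤ wOpNorm (SimpleGraph.pathGraph n) 1 := by
    filter_upwards [Filter.eventually_ge_atTop 1] with n hn1
    have hn : 0 < n := hn1
    refine le_trans ?_ (wOpNorm_lb hn)
    have hx : (0:ℝ) < n := by exact_mod_cast hn
    have hd : ((n/2 : ℕ) : ℝ) * 2 ≤ n := by exact_mod_cast Nat.div_mul_le_self n 2
    have hdnn : (0:ℝ) ≤ ((n/2 : ℕ) : ℝ) := Nat.cast_nonneg _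
    have hstep1 : (8:ℝ)/((n:ℝ)+4) ≤ 8/n := by gcongr <;> linarith
    have hstep2 : 2 - 8/((n:ℝ)+4) = 2*n/((n:ℝ)+4) := by field_simp; ring
    have hstep3 : 2*(n:ℝ)/((n:ℝ)+4) ≤ (n:ℝ)/(((n/2:ℕ):ℝ)+2) := by
      rw [div_le_div_iff₀ (by positivity) (by positivity)]
      nlinarith [hd, hx]
    linarith
  have hup : ∀ᶠ n : ℕ in Filter.atTop, wOpNorm (SimpleGraph.pathGraph n) 1 ≤ 2 :=
    Filter.Eventually.of_forall fun n => wOpNorm_le_two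
  have hg : Filter.Tendsto (fun n : ℕ => 2 - 8/(n:ℝ)) Filter.atTop (nhds 2) := by
    have h0 : Filter.Tendsto (fun n : ℕ => 8/(n:ℝ)) Filter.atTop (nhds 0) :=
      tendsto_const_div_atTop_nhds_zero_nat 8
    simpa using Filter.Tendsto.sub (tendsto_const_nhds (x := (2:ℝ))) h0
  exact tendsto_of_tendsto_of_tendsto_of_le_of_le' hg tendsto_const_nhds hlow hup
end
end
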